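/- Let G = H □ B be the Cartesian product of a graph H and a bipartite graph B. If H has maximal matchings N^• and N^∘ with |N^•| = |N^∘| such that every vertex of H is covered by N^• or N^∘, then G has maximal matchings M^• and M^∘ with |M^•| = |M^∘| = |N^•|·|V(B)| such that every vertex of G is covered by M^• or M^∘. -/
import Mathlib


/-- A matching of `G`: a set of edges of `G` that are pairwise vertex-disjoint. -/
def IsMatching {V : Type*} (G : SimpleGraph V) (M : Set (Sym2 V)) : Prop :=
  M ⊆ G.edgeSet ∧ ∀ e ∈ M, ∀ f ∈ M, e ≠ f → ∀ v, v ∈ e → v ∉ f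

/-- A maximal matching: a matching not properly contained in another matching. -/
def IsMaximalMatching {V : Type*} (G : SimpleGraph V) (M : Set (Sym2 V)) : Prop :=
  IsMatching G M ∧ ∀ M', IsMatching G M' → M ⊆ M' → M' = M

/-- A vertex is covered by a matching if it is incident to a matching edge. -/
def Covered {V : Type*} (M : Set (Sym2 V)) (v : V) : Prop :=
  ∃ e ∈ M, v ∈ e

/-- An induced 4-cycle of `G`, recorded as its set of four edges. -/
def IsInduced4Cycle {V : Type*} (G : SimpleGraph V) (C : Set (Sym2 V)) : Prop :=
  ∃ a b c d : V, a ≠ c ∧ b ≠ d ∧ G.Adj a b ∧ G.Adj b c ∧ G.Adj c d ∧ G.Adj d a ∧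
    ¬ G.Adj a c ∧ ¬ G.Adj b d ∧ C = {s(a,b), s(b,c), s(c,d), s(d,a)}

/-- `G` is `α`-heavy: every edge `e` lies in at least `α` induced 4-cycles such that
`e` is the only common edge of any two of these cycles. -/
def IsHeavy {V : Type*} (G : SimpleGraph V) (α : ℕ) : Prop :=
  ∀ e ∈ G.edgeSet, ∃ 𝒞 : Set (Set (Sym2 V)),
    α ≤ 𝒞.ncard ∧ (∀ C ∈ 𝒞, IsInduced4Cycle G C ∧ e ∈ C) ∧
    ∀ C ∈ 𝒞, ∀ C' ∈ 𝒞, C ≠ C' → C ∩ C' = {e}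

/-- The hypercube graph `Q_n` on binary strings of length `n`:
two strings are adjacent iff they differ in exactly one position. -/
def hypercube (n : ℕ) : SimpleGraph (Fin n → Bool) :=
  SimpleGraph.fromRel (fun x y => ∃! i, x i ≠ y i)

/-- The permutahedron graph `Π_n` on permutations of `[n]`:
`σ, τ` are adjacent iff `τ = σ * τᵢ` for an adjacent transposition `τᵢ = (i, i+1)`. -/
def permutahedron (n : ℕ) : SimpleGraph (Equiv.Perm (Fin n)) :=
  SimpleGraph.fromRel
    (fun σ τ => ∃ i j : Fin n, (i : ℕ) + 1 = (j : ℕ) ∧ τ = σ * Equiv.swap i j)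

/-- The neighborhood of the set `X` inside the set `S`. -/
def nbhdIn {V : Type*} (G : SimpleGraph V) (X S : Set V) : Set V :=
  {y ∈ S | ∃ x ∈ X, G.Adj x y}

lemma maximal_cover {V : Type*} {G : SimpleGraph V} {N : Set (Sym2 V)}
    (h : IsMaximalMatching G N) {u u' : V} (huu' : G.Adj u u') :
    Covered N u ∨ Covered N u' := by
  by_contra hc
  push_neg at hc
  obtain ⟨hu, hu'⟩ := hc
  have hnot : ∀ v, v ∈ s(u,u') → ¬ Covered N v := by
    intro v hv
    rw [Sym2.mem_iff] at hv
    rcases hv with rfl | rfl <;> assumption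
  have hmatch : IsMatching G (insert s(u,u') N) := by
    constructor
    · intro e he
      rcases Set.mem_insert_iff.mp he with rfl | he
      · exact huu'
      · exact h.1.1 he
    · intro e he f hf hef v hve
      rcases Set.mem_insert_iff.mp he with rfl | he <;>
        rcases Set.mem_insert_iff.mp hf with rfl | hf
      · exact absurd rfl hef
      · intro hvf; exact hnot v hve ⟨f, hf, hvf⟩
      · intro hvf; exact hnot v hvf ⟨e, he, hve⟩
      · exact h.1.2 e he f hf hef v hve
  have heq := h.2 _ hmatch (Set.subset_insert _ _)
  have hmem : s(u,u') ∈ N := heq ▸ Set.mem_insert _ _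
  exact hu ⟨_, hmem, Sym2.mem_mk_left _ _⟩

def liftEdge {α β : Type*} (p : Sym2 α × β) : Sym2 (α × β) :=
  p.1.map (fun u => (u, p.2))

lemma mem_liftEdge {α β : Type*} {w : α} {c : β} {e : Sym2 α} {b : β} :
    (w, c) ∈ liftEdge (e, b) ↔ w ∈ e ∧ c = b := by
  simp only [liftEdge, Sym2.mem_map, Prod.mk.injEq]
  constructor
  · rintro ⟨a, ha, rfl, rfl⟩; exact ⟨ha, rfl⟩
  · rintro ⟨hw, rfl⟩; exact ⟨w, hw, rfl, rfl⟩

lemma liftEdge_inj {α β : Type*} : Function.Injective (liftEdge (α := α) (β := β)) := by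
  rintro ⟨e, b⟩ ⟨e', b'⟩ h
  induction e using Sym2.ind with
  | _ u v =>
    induction e' using Sym2.ind with
    | _ u' v' =>
      simp only [liftEdge, Sym2.map_pair_eq, Sym2.eq_iff, Prod.mk.injEq] at h
      rcases h with ⟨⟨rfl, rfl⟩, ⟨rfl, _⟩⟩ | ⟨⟨rfl, rfl⟩, ⟨rfl, _⟩⟩
      · rfl
      · simp [Sym2.eq_swap]

lemma ncard_sprod {A B : Type*} (s : Set A) (t : Set B) :
    (s ×ˢ t).ncard = s.ncard * t.ncard := by
  rw [← Nat.card_coe_set_eq, ← Nat.card_coe_set_eq, ← Nat.card_coe_set_eq,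
    Nat.card_congr (Equiv.Set.prod s t), Nat.card_prod]

lemma key_matching {α β : Type*}
    (H : SimpleGraph α) (B : SimpleGraph β)
    (S : Set β) (hbip : ∀ u v, B.Adj u v → (u ∈ S ↔ v ∉ S))
    (Na Nb : Set (Sym2 α))
    (hNa : IsMaximalMatching H Na) (hNb : IsMaximalMatching H Nb)
    (hcov : ∀ v : α, Covered Na v ∨ Covered Nb v) :
    IsMaximalMatching (H.boxProd B) (liftEdge '' ((Na ×ˢ S) ∪ (Nb ×ˢ Sᶜ))) := by
  set M : Set (Sym2 (α × β)) := liftEdge '' ((Na ×ˢ S) ∪ (Nb ×ˢ Sᶜ)) with hM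
  -- helper: membership builder
  have hmemM : ∀ (f : Sym2 α) (b : β), (f ∈ Na ∧ b ∈ S) ∨ (f ∈ Nb ∧ b ∉ S) →
      liftEdge (f, b) ∈ M := by
    rintro f b (⟨hf, hb⟩ | ⟨hf, hb⟩)
    · exact ⟨(f, b), Or.inl ⟨hf, hb⟩, rfl⟩
    · exact ⟨(f, b), Or.inr ⟨hf, hb⟩, rfl⟩
  have hmatch : IsMatching (H.boxProd B) M := by
    constructor
    · rintro s ⟨⟨e, b⟩, hT, rfl⟩
      have heH : e ∈ H.edgeSet := by
        rcases hT with ⟨he, _⟩ | ⟨he, _⟩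
        exacts [hNa.1.1 he, hNb.1.1 he]
      induction e using Sym2.ind with
      | _ u v =>
        simp only [liftEdge, Sym2.map_pair_eq]
        rw [SimpleGraph.mem_edgeSet] at heH ⊢
        exact SimpleGraph.boxProd_adj.mpr (Or.inl ⟨heH, rfl⟩)
    · rintro s ⟨⟨e, b⟩, hT, rfl⟩ t ⟨⟨e', b'⟩, hT', rfl⟩ hst ⟨w, c⟩ hv hvf
      rw [mem_liftEdge] at hv hvf
      obtain ⟨hwe, rfl⟩ := hv
      obtain ⟨hwe', hbb⟩ := hvf
      subst hbb
      have hee : e ≠ e' := fun h => hst (by rw [h])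
      have hsame : (e ∈ Na ∧ e' ∈ Na) ∨ (e ∈ Nb ∧ e' ∈ Nb) := by
        rcases hT with ⟨he, hb⟩ | ⟨he, hb⟩ <;> rcases hT' with ⟨he', hb'⟩ | ⟨he', hb'⟩
        · exact Or.inl ⟨he, he'⟩
        · exact absurd hb hb'
        · exact absurd hb' hb
        · exact Or.inr ⟨he, he'⟩
      rcases hsame with ⟨he, he'⟩ | ⟨he, he'⟩
      · exact hNa.1.2 e he e' he' hee w hwe hwe'
      · exact hNb.1.2 e he e' he' hee w hwe hwe'
  refine ⟨hmatch, fun M' hM' hMM' => ?_⟩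
  refine Set.Subset.antisymm (fun g hg => ?_) hMM'
  have hgE := hM'.1 hg
  induction g using Sym2.ind with
  | _ x y =>
    obtain ⟨u, b⟩ := x
    obtain ⟨u', b'⟩ := y
    rw [SimpleGraph.mem_edgeSet, SimpleGraph.boxProd_adj] at hgE
    rcases hgE with ⟨hadj, heq⟩ | ⟨hadj, heq⟩ <;> dsimp only at hadj heq <;> subst heq
    · -- H-edge in layer b
      have hcase : ∃ N : Set (Sym2 α), IsMaximalMatching H N ∧
          (∀ f ∈ N, liftEdge (f, b) ∈ M) := by
        by_cases hb : b ∈ S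
        · exact ⟨Na, hNa, fun f hf => hmemM f b (Or.inl ⟨hf, hb⟩)⟩
        · exact ⟨Nb, hNb, fun f hf => hmemM f b (Or.inr ⟨hf, hb⟩)⟩
      obtain ⟨N, hNmax, hNlift⟩ := hcase
      have hcov2 := maximal_cover hNmax hadj
      obtain ⟨w, hw, f, hf, hwf⟩ :
          ∃ w, (w = u ∨ w = u') ∧ ∃ f ∈ N, w ∈ f := by
        rcases hcov2 with ⟨f, hf, hwf⟩ | ⟨f, hf, hwf⟩
        exacts [⟨u, Or.inl rfl, f, hf, hwf⟩, ⟨u', Or.inr rfl, f, hf, hwf⟩]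
      have hfM : liftEdge (f, b) ∈ M := hNlift f hf
      have hwmem : (w, b) ∈ liftEdge (f, b) := mem_liftEdge.mpr ⟨hwf, rfl⟩
      have hwg : (w, b) ∈ s((u, b), (u', b)) := by
        rw [Sym2.mem_iff]
        rcases hw with rfl | rfl
        exacts [Or.inl rfl, Or.inr rfl]
      by_cases hgf : s((u, b), (u', b)) = liftEdge (f, b)
      · rw [hgf]; exact hfM
      · exact absurd hwmem (hM'.2 _ hg _ (hMM' hfM) hgf _ hwg)
    · -- B-edge: impossible in M'
      exfalso
      have hbS := hbip b b' hadj
      have hbb : b ≠ b' := hadj.ne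
      obtain ⟨w, c, f, hfM, hwf, hcg⟩ :
          ∃ (w : α) (c : β) (f : Sym2 α × β), liftEdge f ∈ M ∧
            (w, c) ∈ liftEdge f ∧ (w, c) ∈ s((u, b), (u, b')) := by
        by_cases hb : b ∈ S
        · have hb' : b' ∉ S := hbS.mp hb
          rcases hcov u with ⟨f, hf, hwf⟩ | ⟨f, hf, hwf⟩
          · exact ⟨u, b, (f, b), hmemM f b (Or.inl ⟨hf, hb⟩),
              mem_liftEdge.mpr ⟨hwf, rfl⟩, Sym2.mem_mk_left _ _⟩
          · exact ⟨u, b', (f, b'), hmemM f b' (Or.inr ⟨hf, hb'⟩),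
              mem_liftEdge.mpr ⟨hwf, rfl⟩, Sym2.mem_mk_right _ _⟩
        · have hb' : b' ∈ S := by
            by_contra hb'
            exact hb (hbS.mpr hb')
          rcases hcov u with ⟨f, hf, hwf⟩ | ⟨f, hf, hwf⟩
          · exact ⟨u, b', (f, b'), hmemM f b' (Or.inl ⟨hf, hb'⟩),
              mem_liftEdge.mpr ⟨hwf, rfl⟩, Sym2.mem_mk_right _ _⟩
          · exact ⟨u, b, (f, b), hmemM f b (Or.inr ⟨hf, hb⟩),
              mem_liftEdge.mpr ⟨hwf, rfl⟩, Sym2.mem_mk_left _ _⟩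
      have hgne : s((u, b), (u, b')) ≠ liftEdge f := by
        intro h
        obtain ⟨e0, b0⟩ := f
        have h1 : ((u : α), b) ∈ liftEdge (e0, b0) := h ▸ Sym2.mem_mk_left _ _
        have h2 : ((u : α), b') ∈ liftEdge (e0, b0) := h ▸ Sym2.mem_mk_right _ _
        rw [mem_liftEdge] at h1 h2
        exact hbb (h1.2.trans h2.2.symm)
      exact (hM'.2 _ hg _ (hMM' hfM) hgne _ hcg) hwf

lemma key_card {α β : Type*} [Fintype α] [Fintype β]
    (S : Set β) (Na Nb : Set (Sym2 α)) :
    (liftEdge '' ((Na ×ˢ S) ∪ (Nb ×ˢ Sᶜ))).ncard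
      = Na.ncard * S.ncard + Nb.ncard * Sᶜ.ncard := by
  rw [Set.ncard_image_of_injective _ liftEdge_inj]
  rw [Set.ncard_union_eq ?_ (Set.toFinite _) (Set.toFinite _), ncard_sprod, ncard_sprod]
  rw [Set.disjoint_left]
  rintro ⟨e, b⟩ ⟨_, hb⟩ ⟨_, hb'⟩
  exact hb' hb

theorem stmt16' {α β : Type*} [Fintype α] [Fintype β]
    (H : SimpleGraph α) (B : SimpleGraph β)
    (S : Set β) (hbip : ∀ u v, B.Adj u v → (u ∈ S ↔ v ∉ S))
    (N1 N2 : Set (Sym2 α))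
    (hN1 : IsMaximalMatching H N1) (hN2 : IsMaximalMatching H N2)
    (hcard : N1.ncard = N2.ncard)
    (hcov : ∀ v : α, Covered N1 v ∨ Covered N2 v) :
    ∃ M1 M2 : Set (Sym2 (α × β)),
      IsMaximalMatching (H.boxProd B) M1 ∧ IsMaximalMatching (H.boxProd B) M2 ∧
      M1.ncard = N1.ncard * Fintype.card β ∧ M2.ncard = N1.ncard * Fintype.card β ∧
      ∀ x : α × β, Covered M1 x ∨ Covered M2 x := by
  refine ⟨liftEdge '' ((N1 ×ˢ S) ∪ (N2 ×ˢ Sᶜ)), liftEdge '' ((N2 ×ˢ S) ∪ (N1 ×ˢ Sᶜ)),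
    key_matching H B S hbip N1 N2 hN1 hN2 hcov,
    key_matching H B S hbip N2 N1 hN2 hN1 (fun v => (hcov v).symm), ?_, ?_, ?_⟩
  · rw [key_card, ← hcard, ← Nat.mul_add, Set.ncard_add_ncard_compl,
      Nat.card_eq_fintype_card]
  · rw [key_card, hcard, ← Nat.mul_add, Set.ncard_add_ncard_compl,
      Nat.card_eq_fintype_card]
  · rintro ⟨u, b⟩
    by_cases hb : b ∈ S
    · rcases hcov u with ⟨f, hf, hwf⟩ | ⟨f, hf, hwf⟩
      · exact Or.inl ⟨liftEdge (f, b), ⟨(f, b), Or.inl ⟨hf, hb⟩, rfl⟩,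
          mem_liftEdge.mpr ⟨hwf, rfl⟩⟩
      · exact Or.inr ⟨liftEdge (f, b), ⟨(f, b), Or.inl ⟨hf, hb⟩, rfl⟩,
          mem_liftEdge.mpr ⟨hwf, rfl⟩⟩
    · rcases hcov u with ⟨f, hf, hwf⟩ | ⟨f, hf, hwf⟩
      · exact Or.inr ⟨liftEdge (f, b), ⟨(f, b), Or.inr ⟨hf, hb⟩, rfl⟩,
          mem_liftEdge.mpr ⟨hwf, rfl⟩⟩
      · exact Or.inl ⟨liftEdge (f, b), ⟨(f, b), Or.inr ⟨hf, hb⟩, rfl⟩,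
          mem_liftEdge.mpr ⟨hwf, rfl⟩⟩

/-- let `G = H □ B` with `B` bipartite (with part `S`). If `H` has maximal
matchings `N^•`, `N^∘` of equal size such that every vertex of `H` is covered by `N^•` or
`N^∘`, then `G` has maximal matchings `M^•`, `M^∘` of size `|N^•|·|V(B)|` such that every
vertex of `G` is covered by `M^•` or `M^∘`. -/
theorem stmt16 {α β : Type*} [Fintype α] [Fintype β]
    (H : SimpleGraph α) (B : SimpleGraph β)
    (S : Set β) (hbip : ∀ u v, B.Adj u v → (u ∈ S ↔ v ∉ S))
    (N1 N2 : Set (Sym2 α))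
    (hN1 : IsMaximalMatching H N1) (hN2 : IsMaximalMatching H N2)
    (hcard : N1.ncard = N2.ncard)
    (hcov : ∀ v : α, Covered N1 v ∨ Covered N2 v) :
    ∃ M1 M2 : Set (Sym2 (α × β)),
      IsMaximalMatching (H.boxProd B) M1 ∧ IsMaximalMatching (H.boxProd B) M2 ∧
      M1.ncard = N1.ncard * Fintype.card β ∧ M2.ncard = N1.ncard * Fintype.card β ∧
      ∀ x : α × β, Covered M1 x ∨ Covered M2 x := by
  exact stmt16' H B S hbip N1 N2 hN1 hN2 hcard hcov
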